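/- arXiv:2501.14688 — 3 statements merged into one kernel-verified Lean document; each statement's English description precedes it below -/
import Mathlib

section
/- In any MV-algebra, for an element a and a positive integer n, the following are equivalent: (a) na is Boolean (na ⊕ na = na); (b) ¬a ∨ na = 1; (c) na = (n+1)a. (Here na denotes the n-fold ⊕-sum of a.) -/
/-!
Write `s = na`. Since `a ≤ s ≤ s ⊕ a`, monotonicity of `⊕` gives `s ⊕ a = s` as soon as `s` is
Boolean; conversely `s ⊕ a = s` absorbs every multiple of `a`, in particular `s` itself. So all
three conditions reduce to `s ⊕ a = s`: for (c) because `(n+1)a = s ⊕ a`, and for (b) because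
`¬a ∨ s = ¬(a ⊕ s) ⊕ s`, which is `1` exactly when `a ⊕ s ≤ s`.
-/

structure MVAlgebra (A : Type*) where
  add : A → A → A
  neg : A → A
  zero : A
  add_assoc : ∀ x y z : A, add x (add y z) = add (add x y) z
  add_comm : ∀ x y : A, add x y = add y x
  add_zero : ∀ x : A, add x zero = x
  neg_neg : ∀ x : A, neg (neg x) = x
  add_neg_zero : ∀ x : A, add x (neg zero) = neg zero
  luk : ∀ x y : A, add (neg (add (neg x) y)) y = add (neg (add (neg y) x)) x

namespace MVAlgebra

variable {A : Type*}

/-- The top element `1 = ¬0`. -/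
def one (M : MVAlgebra A) : A := M.neg M.zero

/-- The Łukasiewicz product `x ⊙ y = ¬(¬x ⊕ ¬y)`. -/
def mul (M : MVAlgebra A) (x y : A) : A := M.neg (M.add (M.neg x) (M.neg y))

/-- Truncated difference `x ⊖ y = x ⊙ ¬y`. -/
def sub (M : MVAlgebra A) (x y : A) : A := M.mul x (M.neg y)

/-- The natural order: `x ≤ y` iff `¬x ⊕ y = 1`. -/
def le (M : MVAlgebra A) (x y : A) : Prop := M.add (M.neg x) y = M.one

/-- Lattice join `x ∨ y = (x ⊖ y) ⊕ y`. -/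
def sup (M : MVAlgebra A) (x y : A) : A := M.add (M.sub x y) y

/-- Lattice meet `x ∧ y = ¬(¬x ∨ ¬y)`. -/
def inf (M : MVAlgebra A) (x y : A) : A := M.neg (M.sup (M.neg x) (M.neg y))

end MVAlgebra

namespace MVAlgebra
/-- `n`-fold Łukasiewicz sum `na = a ⊕ ⋯ ⊕ a`. -/
def nsmul {A : Type*} (M : MVAlgebra A) : ℕ → A → A
  | 0, _ => M.zero
  | n + 1, a => M.add (M.nsmul n a) a
end MVAlgebra

namespace MVAlgebra

variable {A : Type*} (M : MVAlgebra A)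

lemma zero_add (x : A) : M.add M.zero x = x := by
  rw [M.add_comm]; exact M.add_zero x

lemma add_one (x : A) : M.add x M.one = M.one := M.add_neg_zero x

lemma one_add (x : A) : M.add M.one x = M.one := by
  rw [M.add_comm]; exact M.add_one x

lemma neg_one : M.neg M.one = M.zero := M.neg_neg M.zero

lemma neg_add_self (x : A) : M.add (M.neg x) x = M.one := by
  have h := M.luk x M.one
  rwa [M.add_one, M.neg_one, M.zero_add, eq_comm] at h

lemma le_antisymm {x y : A} (hxy : M.le x y) (hyx : M.le y x) : x = y := by
  have h := M.luk x y
  rw [le] at hxy hyx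
  rwa [hxy, hyx, M.neg_one, M.zero_add, M.zero_add, eq_comm] at h

lemma le_add_right (x y : A) : M.le x (M.add x y) := by
  rw [le, M.add_assoc, M.neg_add_self, M.one_add]

lemma le_add_left (x y : A) : M.le x (M.add y x) := by
  rw [M.add_comm]; exact M.le_add_right x y

lemma exists_add_eq_of_le {x y : A} (h : M.le x y) : ∃ z, M.add x z = y := by
  refine ⟨M.neg (M.add (M.neg y) x), ?_⟩
  have hluk := M.luk x y
  rw [le] at h
  rw [h, M.neg_one, M.zero_add] at hluk
  rw [M.add_comm]
  exact hluk.symm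

lemma add_le_add_left {x y : A} (h : M.le x y) (z : A) : M.le (M.add z x) (M.add z y) := by
  obtain ⟨w, rfl⟩ := M.exists_add_eq_of_le h
  rw [M.add_assoc]
  exact M.le_add_right _ _

lemma le_nsmul (a : A) {n : ℕ} (hn : 1 ≤ n) : M.le a (M.nsmul n a) := by
  obtain ⟨m, rfl⟩ := Nat.exists_eq_add_of_le' hn
  exact M.le_add_left a (M.nsmul m a)

lemma add_nsmul_eq_self {s a : A} (h : M.add s a = s) (k : ℕ) : M.add s (M.nsmul k a) = s := by
  induction k with
  | zero => exact M.add_zero s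
  | succ k ih => rw [nsmul, M.add_assoc, ih, h]

lemma sup_neg_eq_one_iff (x y : A) : M.sup (M.neg x) y = M.one ↔ M.add x y = y := by
  have hsup : M.sup (M.neg x) y = M.add (M.neg (M.add x y)) y := by
    simp only [sup, sub, mul, M.neg_neg]
  rw [hsup]
  constructor
  · intro h
    exact M.le_antisymm h (M.le_add_left y x)
  · intro h
    rw [h, M.neg_add_self]

lemma nsmul_add_self_eq_self_iff (a : A) {n : ℕ} (hn : 1 ≤ n) :
    M.add (M.nsmul n a) (M.nsmul n a) = M.nsmul n a ↔ M.add (M.nsmul n a) a = M.nsmul n a := by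
  constructor
  · intro hbool
    have hle := M.add_le_add_left (M.le_nsmul a hn) (M.nsmul n a)
    rw [hbool] at hle
    exact M.le_antisymm hle (M.le_add_right _ a)
  · intro h
    exact M.add_nsmul_eq_self h n

end MVAlgebra

/-- For an element `a` of an MV-algebra and a positive integer `n`, the following are
equivalent: `na` is Boolean; `¬a ∨ na = 1`; `na = (n+1)a`. -/
theorem mv_archimedean_tfae {A : Type*} (M : MVAlgebra A) (a : A) (n : ℕ) (hn : 1 ≤ n) :
    (M.add (M.nsmul n a) (M.nsmul n a) = M.nsmul n a ↔
      M.sup (M.neg a) (M.nsmul n a) = M.one) ∧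
    (M.add (M.nsmul n a) (M.nsmul n a) = M.nsmul n a ↔
      M.nsmul n a = M.nsmul (n + 1) a) := by
  rw [M.nsmul_add_self_eq_self_iff a hn, M.sup_neg_eq_one_iff, M.add_comm a]
  exact ⟨Iff.rfl, eq_comm⟩
end

section
/- Let C be the Cantor set with its usual topology τ. For q ∈ [0,1] ∩ ℚ and U a clopen subset of C, define q̄_U : C → [0,1] by q̄_U(x) = q if x ∈ U and 0 otherwise. Then the set A of all finite pointwise suprema ⋁_{i=1}^n (q̄ᵢ)_{Uᵢ} (qᵢ rational in [0,1], Uᵢ clopen) is closed under the pointwise MV-operations of [0,1]^C: it contains the constant functions 0 and 1 and is closed under pointwise ¬ (f ↦ 1−f) and pointwise truncated sum (f,g) ↦ min(f+g,1). -/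
/-- `q̄_U : C → [0,1] ⊆ ℝ`: the function equal to `q` on `U` and `0` elsewhere. -/
noncomputable def scaledIndicator {C : Type*} (U : Set C) (q : ℝ) : C → ℝ :=
  open Classical in fun x => if x ∈ U then q else 0

/-- The set of all finite (pointwise) suprema `⋁_{i} (qᵢ)̄_{Uᵢ}` with each `qᵢ` a rational
number in `[0,1]` and each `Uᵢ` clopen. -/
def ratClopenSups (C : Type*) [TopologicalSpace C] : Set (C → ℝ) :=
  {f | ∃ (n : ℕ) (q : Fin n → ℝ) (U : Fin n → Set C),
    (∀ i, q i ∈ Set.Icc (0 : ℝ) 1 ∧ ∃ r : ℚ, q i = (r : ℝ)) ∧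
    (∀ i, IsClopen (U i)) ∧
    f = fun x => ⨆ i, scaledIndicator (U i) (q i) x}

open Set

/-- Characterization predicate. -/
def ratClopenP {C : Type*} [TopologicalSpace C] (f : C → ℝ) : Prop :=
  (Set.range f).Finite ∧ (∀ x, f x ∈ Set.Icc (0:ℝ) 1) ∧ (∀ x, ∃ r : ℚ, f x = (r:ℝ)) ∧
  ∀ v : ℝ, IsClopen (f ⁻¹' {v})

lemma scaledIndicator_nonneg {C : Type*} {U : Set C} {q : ℝ} (hq : 0 ≤ q) (x : C) :
    0 ≤ scaledIndicator U q x := by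
  unfold scaledIndicator; split <;> simp [hq]

lemma mem_ratClopenSups_iff {C : Type*} [TopologicalSpace C] (f : C → ℝ) :
    f ∈ ratClopenSups C ↔ ratClopenP f := by
  classical
  constructor
  · rintro ⟨n, q, U, hq, hU, rfl⟩
    set g : C → ℝ := fun x => ⨆ i, scaledIndicator (U i) (q i) x with hg
    -- each value is `val S` for the pattern `S` of `x`
    set val : Finset (Fin n) → ℝ := fun S => ⨆ i, if i ∈ S then q i else 0 with hval
    set pat : C → Finset (Fin n) := fun x => Finset.univ.filter (fun i => x ∈ U i) with hpat
    have hconst : ∀ x, g x = val (pat x) := by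
      intro x
      simp only [hg, hval, hpat]
      congr 1; funext i
      simp only [scaledIndicator, Finset.mem_filter, Finset.mem_univ, true_and]
    have hWclopen : ∀ S : Finset (Fin n), IsClopen {x | pat x = S} := by
      intro S
      have : {x | pat x = S} = ⋂ i, (if i ∈ S then U i else (U i)ᶜ) := by
        ext x
        simp only [mem_setOf_eq, mem_iInter, hpat]
        constructor
        · rintro rfl i
          by_cases h : x ∈ U i <;> simp [h]
        · intro h
          ext i
          simp only [Finset.mem_filter, Finset.mem_univ, true_and]
          have := h i
          by_cases hiS : i ∈ S <;> simp [hiS] at this <;> simp [this, hiS]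
      rw [this]
      exact isClopen_iInter_of_finite fun i => by
        by_cases hiS : i ∈ S <;> simp [hiS, hU i, (hU i).compl]
    refine ⟨?_, ?_, ?_, ?_⟩
    · have : range g ⊆ range val := by
        rintro _ ⟨x, rfl⟩; exact ⟨pat x, (hconst x).symm⟩
      exact (Set.finite_range val).subset this
    · intro x
      constructor
      · exact Real.iSup_nonneg fun i => scaledIndicator_nonneg (hq i).1.1 x
      · refine Real.iSup_le (fun i => ?_) zero_le_one
        unfold scaledIndicator; split
        · exact (hq i).1.2
        · exact zero_le_one
    · intro x
      -- g x equals 0 or some q i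
      by_cases hne : ∃ i, x ∈ U i
      · obtain ⟨i₀, hi₀⟩ := hne
        have hnonempty : Nonempty (Fin n) := ⟨i₀⟩
        obtain ⟨j, hj⟩ := Finite.exists_max (fun i => scaledIndicator (U i) (q i) x)
        have hgx : g x = scaledIndicator (U j) (q j) x := by
          refine le_antisymm (Real.iSup_le hj (scaledIndicator_nonneg (hq j).1.1 x)) ?_
          exact le_ciSup (f := fun i => scaledIndicator (U i) (q i) x)
            (Set.Finite.bddAbove (Set.finite_range _)) j
        rw [hgx]
        unfold scaledIndicator; split
        · exact (hq j).2
        · exact ⟨0, by norm_num⟩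
      · refine ⟨0, ?_⟩
        push_neg at hne
        have : ∀ i, scaledIndicator (U i) (q i) x = 0 := by
          intro i; unfold scaledIndicator; simp [hne i]
        simp only [hg, this, Rat.cast_zero]
        exact Real.iSup_const_zero
    · intro v
      have : g ⁻¹' {v} = ⋃ S ∈ {S : Finset (Fin n) | val S = v}, {x | pat x = S} := by
        ext x
        simp only [mem_preimage, mem_singleton_iff, mem_iUnion, mem_setOf_eq]
        constructor
        · intro h; exact ⟨pat x, by rw [← hconst x, h], rfl⟩
        · rintro ⟨S, hS, hxS⟩; rw [hconst x, hxS, hS]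
      rw [this]
      exact (Set.toFinite _).isClopen_biUnion fun S _ => hWclopen S
  · rintro ⟨hfin, hIcc, hrat, hclopen⟩
    classical
    set s : Finset ℝ := hfin.toFinset with hs
    refine ⟨s.card, fun i => (s.equivFin.symm i : ℝ), fun i => f ⁻¹' {(s.equivFin.symm i : ℝ)},
      ?_, fun i => hclopen _, ?_⟩
    · intro i
      have hmem : ((s.equivFin.symm i : ℝ)) ∈ range f :=
        hfin.mem_toFinset.1 (s.equivFin.symm i).2
      obtain ⟨x, hx⟩ := hmem
      constructor
      · show ((s.equivFin.symm i : ℝ)) ∈ Set.Icc (0:ℝ) 1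
        rw [← hx]; exact hIcc x
      · show ∃ r : ℚ, ((s.equivFin.symm i : ℝ)) = (r:ℝ)
        rw [← hx]; exact hrat x
    · funext x
      show f x = ⨆ i, scaledIndicator (f ⁻¹' {((s.equivFin.symm i : ℝ))}) ((s.equivFin.symm i : ℝ)) x
      have hfx : f x ∈ s := by rw [hs, Set.Finite.mem_toFinset]; exact ⟨x, rfl⟩
      set i₀ := s.equivFin ⟨f x, hfx⟩ with hi₀
      have hq₀ : ((s.equivFin.symm i₀ : ℝ)) = f x := by rw [hi₀, Equiv.symm_apply_apply]
      have hle : ∀ i, scaledIndicator (f ⁻¹' {(s.equivFin.symm i : ℝ)})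
          ((s.equivFin.symm i : ℝ)) x ≤ f x := by
        intro i
        unfold scaledIndicator
        split
        · next h => rw [mem_preimage, mem_singleton_iff] at h; rw [← h]
        · exact (hIcc x).1
      have hval : scaledIndicator (f ⁻¹' {(s.equivFin.symm i₀ : ℝ)})
          ((s.equivFin.symm i₀ : ℝ)) x = f x := by
        unfold scaledIndicator
        rw [if_pos]
        · exact hq₀
        · rw [mem_preimage, mem_singleton_iff, hq₀]
      have hb : BddAbove (range fun i =>
          scaledIndicator (f ⁻¹' {((s.equivFin.symm i : ℝ))}) ((s.equivFin.symm i : ℝ)) x) :=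
        Set.Finite.bddAbove (Set.finite_range _)
      have h2 := le_ciSup hb i₀
      rw [hval] at h2
      exact le_antisymm h2 (Real.iSup_le hle (hIcc x).1)

/-- Let `C` be the Cantor set with its usual (subspace) topology.  The set of finite
pointwise suprema of rational-scaled clopen indicator functions contains the constant
functions `0` and `1`, and is closed under the pointwise MV-operations of `[0,1]^C`:
negation `f ↦ 1 - f` and truncated sum `(f, g) ↦ min (f + g) 1`. -/
theorem ratClopenSups_closed_under_mv_ops :
    ((fun _ => (0 : ℝ)) ∈ ratClopenSups (↥cantorSet)) ∧
    ((fun _ => (1 : ℝ)) ∈ ratClopenSups (↥cantorSet)) ∧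
    (∀ f ∈ ratClopenSups (↥cantorSet), (fun x => 1 - f x) ∈ ratClopenSups (↥cantorSet)) ∧
    (∀ f ∈ ratClopenSups (↥cantorSet), ∀ g ∈ ratClopenSups (↥cantorSet),
      (fun x => min (f x + g x) 1) ∈ ratClopenSups (↥cantorSet)) := by
  classical
  refine ⟨?_, ?_, ?_, ?_⟩
  · rw [mem_ratClopenSups_iff]
    refine ⟨(finite_singleton 0).subset (range_subset_iff.2 fun _ => rfl), fun x => by norm_num,
      fun x => ⟨0, by norm_num⟩, fun v => ?_⟩
    by_cases h : (0:ℝ) = v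
    · have : (fun _ : ↥cantorSet => (0:ℝ)) ⁻¹' {v} = univ := by ext x; simp [h]
      rw [this]; exact isClopen_univ
    · have : (fun _ : ↥cantorSet => (0:ℝ)) ⁻¹' {v} = ∅ := by ext x; simp [h]
      rw [this]; exact isClopen_empty
  · rw [mem_ratClopenSups_iff]
    refine ⟨(finite_singleton 1).subset (range_subset_iff.2 fun _ => rfl), fun x => by norm_num,
      fun x => ⟨1, by norm_num⟩, fun v => ?_⟩
    by_cases h : (1:ℝ) = v
    · have : (fun _ : ↥cantorSet => (1:ℝ)) ⁻¹' {v} = univ := by ext x; simp [h]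
      rw [this]; exact isClopen_univ
    · have : (fun _ : ↥cantorSet => (1:ℝ)) ⁻¹' {v} = ∅ := by ext x; simp [h]
      rw [this]; exact isClopen_empty
  · intro f hf
    rw [mem_ratClopenSups_iff] at hf ⊢
    obtain ⟨hfin, hIcc, hrat, hclopen⟩ := hf
    refine ⟨?_, ?_, ?_, ?_⟩
    · have : range (fun x => 1 - f x) ⊆ (fun a => 1 - a) '' range f := by
        rintro _ ⟨x, rfl⟩; exact ⟨f x, ⟨x, rfl⟩, rfl⟩
      exact (hfin.image _).subset this
    · intro x
      obtain ⟨h0, h1⟩ := hIcc x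
      simp only [mem_Icc]
      constructor <;> linarith
    · intro x
      obtain ⟨r, hr⟩ := hrat x
      exact ⟨1 - r, by push_cast; rw [hr]⟩
    · intro v
      have : (fun x => 1 - f x) ⁻¹' {v} = f ⁻¹' {1 - v} := by
        ext x; simp only [mem_preimage, mem_singleton_iff]; constructor <;> intro h <;> linarith
      rw [this]; exact hclopen _
  · intro f hf g hg
    rw [mem_ratClopenSups_iff] at hf hg ⊢
    obtain ⟨hffin, hfIcc, hfrat, hfclopen⟩ := hf
    obtain ⟨hgfin, hgIcc, hgrat, hgclopen⟩ := hg
    refine ⟨?_, ?_, ?_, ?_⟩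
    · have : range (fun x => min (f x + g x) 1) ⊆
          Set.image2 (fun a b => min (a + b) 1) (range f) (range g) := by
        rintro _ ⟨x, rfl⟩; exact ⟨f x, ⟨x, rfl⟩, g x, ⟨x, rfl⟩, rfl⟩
      exact (hffin.image2 _ hgfin).subset this
    · intro x
      constructor
      · exact le_min (by linarith [(hfIcc x).1, (hgIcc x).1]) zero_le_one
      · exact min_le_right _ _
    · intro x
      obtain ⟨r, hr⟩ := hfrat x
      obtain ⟨t, ht⟩ := hgrat x
      refine ⟨min (r + t) 1, ?_⟩
      show min (f x + g x) 1 = ((min (r + t) 1 : ℚ) : ℝ)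
      rw [hr, ht, Rat.cast_min]
      push_cast
      ring_nf
    · intro v
      have heq : (fun x => min (f x + g x) 1) ⁻¹' {v} =
          ⋃ a ∈ (hffin.toFinset : Finset ℝ), ⋃ b ∈ (hgfin.toFinset : Finset ℝ),
            (if min (a + b) 1 = v then f ⁻¹' {a} ∩ g ⁻¹' {b} else ∅) := by
        ext x
        simp only [mem_preimage, mem_singleton_iff, mem_iUnion]
        constructor
        · intro h
          refine ⟨f x, by simp [Set.Finite.mem_toFinset], g x, by simp [Set.Finite.mem_toFinset], ?_⟩
          rw [if_pos h]; exact ⟨rfl, rfl⟩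
        · rintro ⟨a, -, b, -, hx⟩
          split at hx
          · next h =>
              obtain ⟨h1, h2⟩ := hx
              rw [mem_preimage, mem_singleton_iff] at h1 h2
              rw [h1, h2]; exact h
          · exact absurd hx (notMem_empty x)
      rw [heq]
      refine isClopen_biUnion_finset fun a _ => isClopen_biUnion_finset fun b _ => ?_
      split
      · exact (hfclopen a).inter (hgclopen b)
      · exact isClopen_empty
end

section
/- Let C be the Cantor set, τ its usual topology, and τ' the MV-topology on C generated by the fuzzy open balls β_r(α) induced by the Euclidean metric. A map f : C → C is an MV-homeomorphism with respect to τ' if and only if it is a homeomorphism with respect to τ. (Concretely: a bijection f of C is a homeomorphism of (C,τ) iff for every function α : C → [0,1] of the form ⋁_{i=1}^n (qᵢ)̄_{Uᵢ} with qᵢ rational and Uᵢ clopen, both α ∘ f and α ∘ f⁻¹ are again of this form.) -/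
open Set Topology TopologicalSpace

lemma scaledIndicator_comp {X Y : Type*} (U : Set Y) (q : ℝ) (g : X → Y) :
    scaledIndicator U q ∘ g = scaledIndicator (g ⁻¹' U) q := rfl

section ScaledIndicator

variable {X Y : Type*} [TopologicalSpace X] [TopologicalSpace Y]

lemma IsClopen.continuous_scaledIndicator {U : Set X} (hU : IsClopen U) (q : ℝ) :
    Continuous (scaledIndicator U q) := by
  classical
  exact continuous_if (fun a ha => absurd (hU.frontier_eq ▸ ha) (notMem_empty a))
    continuousOn_const continuousOn_const

lemma isOpen_of_continuous_scaledIndicator_one {U : Set X}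
    (h : Continuous (scaledIndicator U 1)) : IsOpen U := by
  have hU : U = scaledIndicator U 1 ⁻¹' Ioi (1 / 2) := by
    ext x
    by_cases hx : x ∈ U <;> norm_num [scaledIndicator, hx]
  exact hU ▸ isOpen_Ioi.preimage h

lemma IsClopen.scaledIndicator_mem_ratClopenSups {U : Set X} (hU : IsClopen U) {r : ℚ}
    (hr : (r : ℝ) ∈ Icc 0 1) : scaledIndicator U r ∈ ratClopenSups X :=
  ⟨1, fun _ => r, fun _ => U, fun _ => ⟨hr, r, rfl⟩, fun _ => hU, by simp only [ciSup_const]⟩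

lemma continuous_of_mem_ratClopenSups {f : X → ℝ} (hf : f ∈ ratClopenSups X) :
    Continuous f := by
  obtain ⟨n, q, U, -, hU, rfl⟩ := hf
  rcases n.eq_zero_or_pos with rfl | hn
  · -- an empty supremum in `ℝ` is the junk value `sSup ∅ = 0`
    simpa using continuous_const (y := (0 : ℝ))
  · have : Nonempty (Fin n) := Fin.pos_iff_nonempty.mp hn
    simp_rw [← Finset.sup'_univ_eq_ciSup]
    exact Continuous.finset_sup'_apply Finset.univ_nonempty fun i _ =>
      (hU i).continuous_scaledIndicator (q i)

lemma Continuous.comp_mem_ratClopenSups {g : X → Y} (hg : Continuous g) {f : Y → ℝ}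
    (hf : f ∈ ratClopenSups Y) : f ∘ g ∈ ratClopenSups X := by
  obtain ⟨n, q, U, hq, hU, rfl⟩ := hf
  exact ⟨n, q, fun i => g ⁻¹' U i, hq, fun i => (hU i).preimage hg, rfl⟩

theorem continuous_iff_comp_mem_ratClopenSups
    (hY : IsTopologicalBasis {s : Set Y | IsClopen s}) {g : X → Y} :
    Continuous g ↔ ∀ f ∈ ratClopenSups Y, f ∘ g ∈ ratClopenSups X := by
  refine ⟨fun hg f hf => hg.comp_mem_ratClopenSups hf, fun h => ?_⟩
  refine hY.continuous_iff.mpr fun U hU => isOpen_of_continuous_scaledIndicator_one ?_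
  rw [← scaledIndicator_comp]
  have h1 := h _ (hU.scaledIndicator_mem_ratClopenSups (r := 1) (by norm_num))
  exact continuous_of_mem_ratClopenSups (by simpa only [Rat.cast_one] using h1)

end ScaledIndicator

instance : CompactSpace cantorSet := isCompact_iff_compactSpace.mp isCompact_cantorSet

instance : TotallyDisconnectedSpace cantorSet :=
  cantorSetHomeomorphNatToBool.symm.totallyDisconnectedSpace

/-- A bijection `f` of the Cantor set is a homeomorphism for the usual topology `τ` iff it
is an MV-homeomorphism for the induced MV-topology `τ'`, i.e. iff for every basic clopen
fuzzy set `α` (a finite supremum of rational-scaled clopen indicators) both `α ∘ f` and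
`α ∘ f⁻¹` are again basic clopen fuzzy sets. -/
theorem cantor_mv_homeo_iff_homeo (e : ↥cantorSet ≃ ↥cantorSet) :
    (Continuous e ∧ Continuous e.symm) ↔
    (∀ α ∈ ratClopenSups (↥cantorSet),
      (α ∘ e) ∈ ratClopenSups (↥cantorSet) ∧ (α ∘ e.symm) ∈ ratClopenSups (↥cantorSet)) := by
  rw [continuous_iff_comp_mem_ratClopenSups isTopologicalBasis_isClopen,
    continuous_iff_comp_mem_ratClopenSups isTopologicalBasis_isClopen, forall₂_and]
end
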